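/- Let k ∈ ℝ, let 0 < r2 < r1 < e^{−4} with r1 ≤ 1/(100(1+|k|)), let 0 < c1 < 1, and assume (1/2)·r ≤ sn_k(r) ≤ 2r and |cn_k(r)/sn_k(r) − 1/r| ≤ |k|·r for all r ∈ (0, r1]. Define ψ(r) = ∫₀^r [ ζ(s/r2)/(s·(log(1/s))²) + (1 − ζ(s/r2))·s/r2 ] ds, h(r) = 1 − c1·η(r/r1)·ψ(r), and f(r) = sn_k(r)·h(r). Then f'(r) > 0 for every r ∈ (0, r1]. -/

import Mathlib

/-- The fixed pair of smooth cutoff functions used in the cutoff-function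
construction. -/
def CutoffPair (ζ η : ℝ → ℝ) : Prop :=
  ContDiff ℝ (⊤ : ℕ∞) ζ ∧ ContDiff ℝ (⊤ : ℕ∞) η ∧
  (∀ x ∈ Set.Icc (0 : ℝ) (1 / 2), ζ x = 0) ∧ (∀ x ≥ (1 : ℝ), ζ x = 1) ∧
  (∀ x ≥ (0 : ℝ), 0 ≤ deriv ζ x ∧ deriv ζ x ≤ 4 ∧ |deriv (deriv ζ) x| ≤ 16) ∧
  (∀ x ∈ Set.Icc (0 : ℝ) (1 / 2), η x = 1) ∧ (∀ x ≥ (1 : ℝ), η x = 0) ∧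
  (∀ x ≥ (0 : ℝ), -4 ≤ deriv η x ∧ deriv η x ≤ 0 ∧ |deriv (deriv η) x| ≤ 16)

/-- `sn k` is the generalized sine function. -/
noncomputable def sn (k r : ℝ) : ℝ :=
  if 0 < k then Real.sin (Real.sqrt k * r) / Real.sqrt k
  else if k = 0 then r
  else Real.sinh (Real.sqrt (-k) * r) / Real.sqrt (-k)

/-- `cn k = (sn k)'`. -/
noncomputable def cn (k r : ℝ) : ℝ := deriv (sn k) r

/-- `ψ(r) = ∫₀^r [ζ(s/r2)/(s log²(1/s)) + (1-ζ(s/r2)) s/r2] ds`. -/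
noncomputable def psiFun (ζ : ℝ → ℝ) (r2 r : ℝ) : ℝ :=
  ∫ s in (0 : ℝ)..r,
    (ζ (s / r2) * (1 / (s * (Real.log (1 / s)) ^ 2)) + (1 - ζ (s / r2)) * (s / r2))

/-- `h(r) = 1 - c1 η(r/r1) ψ(r)`. -/
noncomputable def hFun (ζ η : ℝ → ℝ) (c1 r1 r2 r : ℝ) : ℝ :=
  1 - c1 * η (r / r1) * psiFun ζ r2 r

/-- `f(r) = sn_k(r) h(r)`. -/
noncomputable def fFun (ζ η : ℝ → ℝ) (k c1 r1 r2 r : ℝ) : ℝ :=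
  sn k r * hFun ζ η c1 r1 r2 r

open Set Filter MeasureTheory Real Topology

/-- auxiliary: a smooth function with nonnegative derivative on `[0,∞)`, vanishing on
`[0,1/2]` and equal to `1` on `[1,∞)`, takes values in `[0,1]` on `[0,∞)`. -/
lemma aux_zeta_mem {ζ : ℝ → ℝ} (hζC : ContDiff ℝ (⊤ : ℕ∞) ζ)
    (h0 : ∀ x ∈ Set.Icc (0 : ℝ) (1 / 2), ζ x = 0) (h1 : ∀ x ≥ (1 : ℝ), ζ x = 1)
    (hd : ∀ x ≥ (0 : ℝ), 0 ≤ deriv ζ x) :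
    ∀ x ≥ (0 : ℝ), 0 ≤ ζ x ∧ ζ x ≤ 1 := by
  have hmono : MonotoneOn ζ (Set.Ici 0) := by
    apply monotoneOn_of_deriv_nonneg (convex_Ici 0) hζC.continuous.continuousOn
      ((hζC.differentiable (by simp)).differentiableOn)
    intro x hx
    rw [interior_Ici] at hx
    exact hd x (le_of_lt hx)
  intro x hx
  constructor
  · have := hmono (Set.self_mem_Ici) hx hx
    rwa [h0 0 ⟨le_rfl, by norm_num⟩] at this
  · rcases le_total x 1 with hx1 | hx1
    · have := hmono hx (by norm_num : (1:ℝ) ∈ Set.Ici (0:ℝ)) hx1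
      rwa [h1 1 le_rfl] at this
    · rw [h1 x hx1]

lemma aux_eta_mem {η : ℝ → ℝ} (hηC : ContDiff ℝ (⊤ : ℕ∞) η)
    (h1 : ∀ x ∈ Set.Icc (0 : ℝ) (1 / 2), η x = 1) (h0 : ∀ x ≥ (1 : ℝ), η x = 0)
    (hd : ∀ x ≥ (0 : ℝ), deriv η x ≤ 0) :
    ∀ x ≥ (0 : ℝ), 0 ≤ η x ∧ η x ≤ 1 := by
  have hmono : AntitoneOn η (Set.Ici 0) := by
    apply antitoneOn_of_deriv_nonpos (convex_Ici 0) hηC.continuous.continuousOn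
      ((hηC.differentiable (by simp)).differentiableOn)
    intro x hx
    rw [interior_Ici] at hx
    exact hd x (le_of_lt hx)
  intro x hx
  constructor
  · rcases le_total x 1 with hx1 | hx1
    · have := hmono hx (by norm_num : (1:ℝ) ∈ Set.Ici (0:ℝ)) hx1
      rwa [h0 1 le_rfl] at this
    · rw [h0 x hx1]
  · have := hmono (Set.self_mem_Ici) hx hx
    rwa [h1 0 ⟨le_rfl, by norm_num⟩] at this

lemma sn_differentiable (k : ℝ) : Differentiable ℝ (sn k) := by
  unfold sn
  rcases lt_trichotomy 0 k with hk | hk | hk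
  · simp only [if_pos hk]
    exact (Real.differentiable_sin.comp ((differentiable_id.const_mul _))).div_const _
  · simp only [if_neg (by simp [← hk] : ¬ (0:ℝ) < k), if_pos hk.symm]
    exact differentiable_id
  · have h1 : ¬ (0 < k) := by linarith
    have h2 : k ≠ 0 := by linarith
    simp only [if_neg h1, if_neg h2]
    exact (Real.differentiable_sinh.comp ((differentiable_id.const_mul _))).div_const _

set_option maxHeartbeats 1600000 in
/-- strict mean convexity of the constant-`r` cylinders:
`f' > 0` on `(0, r1]`. -/

theorem stmt_9 (ζ η : ℝ → ℝ) (hcut : CutoffPair ζ η)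
    (k r1 r2 c1 : ℝ) (hr20 : 0 < r2) (hr21 : r2 < r1)
    (hr1e : r1 < Real.exp (-4)) (hr1k : r1 ≤ 1 / (100 * (1 + |k|)))
    (hc10 : 0 < c1) (hc11 : c1 < 1)
    (hsn : ∀ r ∈ Set.Ioc (0 : ℝ) r1,
      (1 / 2) * r ≤ sn k r ∧ sn k r ≤ 2 * r ∧
      |cn k r / sn k r - 1 / r| ≤ |k| * r) :
    ∀ r ∈ Set.Ioc (0 : ℝ) r1, 0 < deriv (fFun ζ η k c1 r1 r2) r := by
  obtain ⟨hζC, hηC, hζ0, hζ1, hζd, hη1, hη0, hηd⟩ := hcut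
  have hζmem := aux_zeta_mem hζC hζ0 hζ1 (fun x hx => (hζd x hx).1)
  have hηmem := aux_eta_mem hηC hη1 hη0 (fun x hx => (hηd x hx).2.1)
  have hr10 : 0 < r1 := hr20.trans hr21
  -- numeric facts
  have hexp4 : (50 : ℝ) < Real.exp 4 := by
    have h1 : (2.7182818283 : ℝ) < Real.exp 1 := Real.exp_one_gt_d9
    have h2 : Real.exp 4 = (Real.exp 1) ^ (4 : ℕ) := by
      rw [← Real.exp_nat_mul]; norm_num
    have h3 : (2.7:ℝ) ^ (4:ℕ) ≤ (Real.exp 1) ^ (4:ℕ) :=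
      pow_le_pow_left₀ (by norm_num) (by linarith) 4
    rw [h2]; nlinarith
  have he4 : Real.exp (-4) < 1 / 50 := by
    rw [Real.exp_neg]
    calc (Real.exp 4)⁻¹ = 1 / Real.exp 4 := by rw [one_div]
      _ < 1 / 50 := one_div_lt_one_div_of_lt (by norm_num) hexp4
  have hr1small : r1 < 1 / 50 := hr1e.trans he4
  have hkr1 : |k| * r1 ≤ 1 / 100 := by
    have h1k : (0:ℝ) < 1 + |k| := by positivity
    have h2 := mul_le_mul_of_nonneg_left hr1k (abs_nonneg k)
    have h3 : |k| * (1 / (100 * (1 + |k|))) ≤ 1 / 100 := by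
      rw [mul_one_div, div_le_div_iff₀ (by positivity) (by norm_num)]
      nlinarith [abs_nonneg k]
    linarith
  -- log bound
  have hlog4 : ∀ s : ℝ, 0 < s → s ≤ r1 → 4 ≤ Real.log (1 / s) := by
    intro s hs0 hs1
    have h1 : Real.log s ≤ Real.log r1 := Real.log_le_log hs0 hs1
    have h2 : Real.log r1 < Real.log (Real.exp (-4)) := Real.log_lt_log hr10 hr1e
    rw [Real.log_exp] at h2
    rw [one_div, Real.log_inv]
    linarith
  -- The integrand
  set G : ℝ → ℝ := fun s =>
    ζ (s / r2) * (1 / (s * (Real.log (1 / s)) ^ 2)) + (1 - ζ (s / r2)) * (s / r2) with hGdef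
  have hψeq : psiFun ζ r2 = fun r => ∫ s in (0:ℝ)..r, G s := rfl
  -- continuity of G at positive points < 1
  have hGat : ∀ s : ℝ, 0 < s → s < 1 → ContinuousAt G s := by
    intro s hs0 hs1
    have hζcomp : Continuous fun s : ℝ => ζ (s / r2) :=
      hζC.continuous.comp (continuous_id.div_const r2)
    have hinv : ContinuousAt (fun s : ℝ => 1 / s) s :=
      continuousAt_const.div continuousAt_id (ne_of_gt hs0)
    have hlogat : ContinuousAt (fun s : ℝ => Real.log (1 / s)) s :=
      (Real.continuousAt_log (by positivity)).comp hinv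
    have hlogpos : 0 < Real.log (1 / s) :=
      Real.log_pos (by rw [lt_div_iff₀ hs0]; linarith)
    have hden : s * (Real.log (1 / s)) ^ 2 ≠ 0 :=
      mul_ne_zero (ne_of_gt hs0) (pow_ne_zero 2 (ne_of_gt hlogpos))
    apply ContinuousAt.add
    · exact hζcomp.continuousAt.mul
        (continuousAt_const.div (continuousAt_id.mul (hlogat.pow 2)) hden)
    · exact (continuousAt_const.sub hζcomp.continuousAt).mul
        (continuousAt_id.div_const r2)
  -- continuity of G on [0, r1]
  have hGcont : ContinuousOn G (Set.Icc 0 r1) := by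
    intro s hs
    rcases eq_or_lt_of_le hs.1 with h0 | h0
    · -- s = 0
      have hs0 : s = 0 := h0.symm
      subst hs0
      refine ContinuousWithinAt.congr_of_eventuallyEq
        (f := fun s : ℝ => s / r2) ?_ ?_ ?_
      · exact (continuous_id.div_const r2).continuousWithinAt
      · have hmem : Set.Ioo (-(r2/2)) (r2/2) ∈ 𝓝 (0:ℝ) :=
          Ioo_mem_nhds (by linarith) (by linarith)
        filter_upwards [mem_nhdsWithin_of_mem_nhds hmem, self_mem_nhdsWithin]
          with x hx1 hx2
        have hxz : ζ (x / r2) = 0 := by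
          apply hζ0
          constructor
          · exact div_nonneg hx2.1 hr20.le
          · rw [div_le_iff₀ hr20]; nlinarith [hx1.2]
        simp only [hGdef, hxz]; ring
      · simp [hGdef, hζ0 0 ⟨le_rfl, by norm_num⟩]
    · exact (hGat s h0 (lt_of_le_of_lt hs.2 (by linarith))).continuousWithinAt
  -- nonnegativity of G
  have hGnn : ∀ s : ℝ, 0 ≤ s → 0 ≤ G s := by
    intro s hs
    have h1 := hζmem (s / r2) (by positivity)
    have t1 : (0:ℝ) ≤ 1 / (s * (Real.log (1 / s)) ^ 2) := by positivity
    have t2 : (0:ℝ) ≤ s / r2 := by positivity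
    show 0 ≤ ζ (s / r2) * (1 / (s * (Real.log (1 / s)) ^ 2)) + (1 - ζ (s / r2)) * (s / r2)
    exact add_nonneg (mul_nonneg h1.1 t1) (mul_nonneg (by linarith [h1.2]) t2)
  -- upper bound for G (for the comparison function)
  have hGle : ∀ s : ℝ, 0 < s → s ≤ r1 →
      G s ≤ 1 / (s * (Real.log (1 / s)) ^ 2) + 2 / (1 + (s / r2) ^ 2) := by
    intro s hs0 hs1
    have hx0 : (0:ℝ) ≤ s / r2 := by positivity
    have h1 := hζmem (s / r2) hx0
    have t1 : (0:ℝ) ≤ 1 / (s * (Real.log (1 / s)) ^ 2) := by positivity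
    have hterm1 : ζ (s / r2) * (1 / (s * (Real.log (1 / s)) ^ 2)) ≤
        1 / (s * (Real.log (1 / s)) ^ 2) := by
      nlinarith [mul_nonneg (sub_nonneg.mpr h1.2) t1]
    have hterm2 : (1 - ζ (s / r2)) * (s / r2) ≤ 2 / (1 + (s / r2) ^ 2) := by
      rcases le_or_gt 1 (s / r2) with hx | hx
      · rw [hζ1 _ hx]
        simpa using (by positivity : (0:ℝ) ≤ 2 / (1 + (s / r2) ^ 2))
      · have h2 : (1 - ζ (s / r2)) * (s / r2) ≤ s / r2 := by
          nlinarith [mul_nonneg h1.1 hx0]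
        have h3 : s / r2 ≤ 2 / (1 + (s / r2) ^ 2) := by
          rw [le_div_iff₀ (by positivity)]
          have hx3 : (s / r2) ^ 3 ≤ 1 := pow_le_one₀ hx0 hx.le
          nlinarith [hx3]
        linarith
    simp only [hGdef]
    linarith
  -- pointwise bound for G (the derivative bound at r itself)
  have hGr : ∀ s : ℝ, 0 < s → s ≤ r1 → G s ≤ 1 / (16 * s) + 1 := by
    intro s hs0 hs1
    have hL := hlog4 s hs0 hs1
    have h1 := hζmem (s / r2) (by positivity)
    have hL2 : (16:ℝ) ≤ (Real.log (1 / s)) ^ 2 := by nlinarith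
    have hden : (0:ℝ) < s * (Real.log (1 / s)) ^ 2 := mul_pos hs0 (by nlinarith)
    have t1 : 1 / (s * (Real.log (1 / s)) ^ 2) ≤ 1 / (16 * s) := by
      apply one_div_le_one_div_of_le (by linarith)
      have := mul_le_mul_of_nonneg_left hL2 hs0.le
      linarith
    have hterm1 : ζ (s / r2) * (1 / (s * (Real.log (1 / s)) ^ 2)) ≤ 1 / (16 * s) := by
      have : (0:ℝ) ≤ 1 / (s * (Real.log (1 / s)) ^ 2) := by positivity
      nlinarith [h1.1, h1.2]
    have hterm2 : (1 - ζ (s / r2)) * (s / r2) ≤ 1 := by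
      rcases le_or_gt 1 (s / r2) with hx | hx
      · rw [hζ1 _ hx]; norm_num
      · have hx0 : (0:ℝ) ≤ s / r2 := by positivity
        nlinarith [h1.1, h1.2]
    simp only [hGdef]
    linarith
  -- integrability
  have hGint : IntegrableOn G (Set.Icc 0 r1) volume := hGcont.integrableOn_Icc
  have hψcont : ContinuousOn (psiFun ζ r2) (Set.Icc 0 r1) := by
    rw [hψeq]
    have h := intervalIntegral.continuousOn_primitive_interval (μ := volume)
      (f := G) (a := 0) (b := r1) (by rwa [Set.uIcc_of_le hr10.le])
    rwa [Set.uIcc_of_le hr10.le] at h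
  -- FTC: derivative of ψ
  have hψD : ∀ r : ℝ, 0 < r → r ≤ r1 → HasDerivAt (psiFun ζ r2) (G r) r := by
    intro r hr0 hr1'
    have hr1'' : r < 1 := lt_of_le_of_lt hr1' (by linarith)
    have hint : IntervalIntegrable G volume 0 r :=
      (hGcont.mono (Set.Icc_subset_Icc_right hr1')).intervalIntegrable_of_Icc hr0.le
    have hmeas : StronglyMeasurableAtFilter G (𝓝 r) volume := by
      refine ContinuousAt.stronglyMeasurableAtFilter (s := Set.Ioo (0:ℝ) 1) isOpen_Ioo
        (fun x hx => hGat x hx.1 hx.2) r ⟨hr0, hr1''⟩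
    rw [hψeq]
    exact intervalIntegral.integral_hasDerivAt_right hint hmeas (hGat r hr0 hr1'')
  -- ψ is nonnegative
  have hψnn : ∀ r : ℝ, 0 ≤ r → 0 ≤ psiFun ζ r2 r := by
    intro r hr0
    rw [hψeq]
    exact intervalIntegral.integral_nonneg hr0 (fun u hu => hGnn u hu.1)
  -- comparison function F
  set F : ℝ → ℝ := fun s => (Real.log (1 / s))⁻¹ + 2 * r2 * Real.arctan (s / r2) with hFdef
  have hFD : ∀ s : ℝ, 0 < s → s ≤ r1 →
      HasDerivAt F (1 / (s * (Real.log (1 / s)) ^ 2) + 2 / (1 + (s / r2) ^ 2)) s := by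
    intro s hs0 hs1
    have hlogpos : 0 < Real.log (1 / s) := by linarith [hlog4 s hs0 hs1]
    have hsne : s ≠ 0 := ne_of_gt hs0
    have hLne : Real.log (1 / s) ≠ 0 := ne_of_gt hlogpos
    have hinv : HasDerivAt (fun s : ℝ => 1 / s) (-(1 / s ^ 2)) s := by
      simpa [one_div] using hasDerivAt_inv hsne
    have hlog : HasDerivAt (fun s : ℝ => Real.log (1 / s)) (-(1 / s)) s := by
      have h := (Real.hasDerivAt_log (by positivity : 1 / s ≠ 0)).comp s hinv
      refine h.congr_deriv ?_
      field_simp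
    have h1 : HasDerivAt (fun s : ℝ => (Real.log (1 / s))⁻¹)
        (1 / (s * (Real.log (1 / s)) ^ 2)) s := by
      have h := hlog.inv hLne
      refine h.congr_deriv ?_
      field_simp
    have h2 : HasDerivAt (fun s : ℝ => 2 * r2 * Real.arctan (s / r2))
        (2 / (1 + (s / r2) ^ 2)) s := by
      have ha : HasDerivAt (fun s : ℝ => Real.arctan (s / r2))
          (1 / (1 + (s / r2) ^ 2) * (1 / r2)) s :=
        (Real.hasDerivAt_arctan (s / r2)).comp (h := fun x => x / r2) s ((hasDerivAt_id' s).div_const r2)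
      have h := ha.const_mul (2 * r2)
      refine h.congr_deriv ?_
      have : (1:ℝ) + (s / r2) ^ 2 ≠ 0 := by positivity
      field_simp
    exact h1.add h2
  -- continuity of F on [0, r1]
  have hFcont : ContinuousOn F (Set.Icc 0 r1) := by
    intro s hs
    rcases eq_or_lt_of_le hs.1 with h0 | h0
    · have hs0 : s = 0 := h0.symm
      subst hs0
      apply ContinuousWithinAt.add
      · have hIci : ContinuousWithinAt (fun s : ℝ => (Real.log (1 / s))⁻¹) (Set.Ici 0) 0 := by
          rw [← continuousWithinAt_Ioi_iff_Ici]
          have h1 : Tendsto (fun s : ℝ => Real.log (1 / s)) (𝓝[>] (0:ℝ)) atTop := by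
            have h2 : Tendsto Real.log (𝓝[>] (0:ℝ)) atBot :=
              Real.tendsto_log_nhdsGT_zero
            have h3 : Tendsto (fun s : ℝ => -Real.log s) (𝓝[>] (0:ℝ)) atTop :=
              tendsto_neg_atBot_atTop.comp h2
            refine h3.congr (fun s => ?_)
            rw [one_div, Real.log_inv]
          have ht : Tendsto (fun s : ℝ => (Real.log (1 / s))⁻¹) (𝓝[>] (0:ℝ)) (𝓝 0) :=
            h1.inv_tendsto_atTop
          have hval : (Real.log (1 / (0:ℝ)))⁻¹ = 0 := by
            norm_num
          show Tendsto (fun s : ℝ => (Real.log (1 / s))⁻¹) (𝓝[Set.Ioi (0:ℝ)] 0)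
            (𝓝 ((Real.log (1 / (0:ℝ)))⁻¹))
          rw [hval]
          exact ht
        exact hIci.mono Set.Icc_subset_Ici_self
      · exact (continuous_const.mul
          (Real.continuous_arctan.comp (continuous_id.div_const r2))).continuousWithinAt
    · exact ((hFD s h0 hs.2).continuousAt).continuousWithinAt
  -- comparison: ψ ≤ F on (0, r1]
  have hψleF : ∀ r ∈ Set.Ioc (0:ℝ) r1, psiFun ζ r2 r ≤ F r := by
    have hmono : MonotoneOn (fun s => F s - psiFun ζ r2 s) (Set.Icc 0 r1) := by
      apply monotoneOn_of_deriv_nonneg (convex_Icc 0 r1) (hFcont.sub hψcont)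
      · intro s hs
        rw [interior_Icc] at hs
        exact ((hFD s hs.1 hs.2.le).sub
          (hψD s hs.1 hs.2.le)).differentiableAt.differentiableWithinAt
      · intro s hs
        rw [interior_Icc] at hs
        rw [((hFD s hs.1 hs.2.le).sub (hψD s hs.1 hs.2.le)).deriv]
        have := hGle s hs.1 hs.2.le
        linarith
    intro r hr
    have h0 : F 0 - psiFun ζ r2 0 ≤ F r - psiFun ζ r2 r :=
      hmono ⟨le_rfl, hr10.le⟩ ⟨hr.1.le, hr.2⟩ hr.1.le
    have hψ0 : psiFun ζ r2 0 = 0 := by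
      rw [hψeq]; exact intervalIntegral.integral_same
    have hF0 : F 0 = 0 := by
      simp only [hFdef]
      norm_num
    linarith
  -- ψ ≤ 1/2 on (0, r1]
  have hψhalf : ∀ r ∈ Set.Ioc (0:ℝ) r1, psiFun ζ r2 r ≤ 1/2 := by
    intro r hr
    have h1 := hψleF r hr
    have hL := hlog4 r hr.1 hr.2
    have h2 : (Real.log (1 / r))⁻¹ ≤ (4:ℝ)⁻¹ := by
      apply inv_anti₀ (by norm_num)
      exact hL
    have h3 := (Real.arctan_lt_pi_div_two (r / r2)).le
    have h4 : 2 * r2 * Real.arctan (r / r2) ≤ 2 * r2 * (π / 2) :=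
      mul_le_mul_of_nonneg_left h3 (by positivity)
    have h5 : r2 * π ≤ r2 * 3.15 :=
      mul_le_mul_of_nonneg_left Real.pi_lt_d2.le hr20.le
    have hFr : F r = (Real.log (1 / r))⁻¹ + 2 * r2 * Real.arctan (r / r2) := rfl
    rw [hFr] at h1
    nlinarith [hr21, hr1small]
  -- main computation
  intro r hr
  obtain ⟨hr0, hrr1⟩ := hr
  obtain ⟨hs1, hs2, hs3⟩ := hsn r ⟨hr0, hrr1⟩
  have hS : 0 < sn k r := lt_of_lt_of_le (by linarith) hs1
  have hrinv : 50 < 1 / r := by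
    rw [lt_div_iff₀ hr0]; nlinarith
  have hsnD : HasDerivAt (sn k) (cn k r) r := ((sn_differentiable k) r).hasDerivAt
  have hηD : HasDerivAt (fun x : ℝ => η (x / r1)) (deriv η (r / r1) * (1 / r1)) r := by
    have h1 : HasDerivAt (fun x : ℝ => x / r1) (1 / r1) r := by
      simpa using (hasDerivAt_id r).div_const r1
    exact (((hηC.differentiable (by simp)) (r / r1)).hasDerivAt).comp r h1
  have hψDr := hψD r hr0 hrr1
  have hhD : HasDerivAt (hFun ζ η c1 r1 r2)
      (-(c1 * (deriv η (r / r1) * (1 / r1)) * psiFun ζ r2 r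
        + c1 * η (r / r1) * G r)) r := by
    have hmul : HasDerivAt (fun x : ℝ => c1 * η (x / r1) * psiFun ζ r2 x)
        (c1 * (deriv η (r / r1) * (1 / r1)) * psiFun ζ r2 r
          + c1 * η (r / r1) * G r) r :=
      (hηD.const_mul c1).mul hψDr
    exact hmul.const_sub 1
  have hfD : HasDerivAt (fFun ζ η k c1 r1 r2)
      (cn k r * hFun ζ η c1 r1 r2 r + sn k r *
        (-(c1 * (deriv η (r / r1) * (1 / r1)) * psiFun ζ r2 r
          + c1 * η (r / r1) * G r))) r := hsnD.mul hhD
  rw [hfD.deriv]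
  have hE := hηmem (r / r1) (div_nonneg hr0.le hr10.le)
  have hEp : deriv η (r / r1) ≤ 0 := (hηd (r / r1) (div_nonneg hr0.le hr10.le)).2.1
  have hP0 : 0 ≤ psiFun ζ r2 r := hψnn r hr0.le
  have hP2 : psiFun ζ r2 r ≤ 1/2 := hψhalf r ⟨hr0, hrr1⟩
  have hGr0 : 0 ≤ G r := hGnn r hr0.le
  have hGr1 : G r ≤ 1/(16*r) + 1 := hGr r hr0 hrr1
  have hH : hFun ζ η c1 r1 r2 r = 1 - c1 * η (r / r1) * psiFun ζ r2 r := rfl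
  have hHlb : 1/2 ≤ hFun ζ η c1 r1 r2 r := by
    rw [hH]
    nlinarith [mul_nonneg (mul_nonneg hc10.le hE.1) hP0, hE.2, hP0, hP2,
      mul_nonneg hc10.le hE.1]
  -- bound on cn
  have hkr : |k| * r ≤ 1/100 := by
    have := mul_le_mul_of_nonneg_left hrr1 (abs_nonneg k)
    linarith
  have hCS : 1 / r - 1/100 ≤ cn k r / sn k r := by
    have := (abs_le.mp hs3).1
    linarith
  have hC : sn k r * (1/r - 1/100) ≤ cn k r := by
    have h1 := mul_le_mul_of_nonneg_left hCS hS.le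
    have h2 : sn k r * (cn k r / sn k r) = cn k r := by
      field_simp
    linarith
  have ht0 : (0:ℝ) ≤ 1/r - 1/100 := by linarith
  have hC0 : 0 ≤ cn k r := le_trans (mul_nonneg hS.le ht0) hC
  have hterm1 : sn k r * ((1/r - 1/100) * (1/2)) ≤ cn k r * hFun ζ η c1 r1 r2 r := by
    calc sn k r * ((1/r - 1/100) * (1/2))
        = (sn k r * (1/r - 1/100)) * (1/2) := by ring
      _ ≤ cn k r * hFun ζ η c1 r1 r2 r :=
          mul_le_mul hC hHlb (by norm_num) hC0
  have hterm2 : 0 ≤ sn k r * (-(c1 * (deriv η (r / r1) * (1 / r1)) * psiFun ζ r2 r)) := by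
    have h1 : deriv η (r / r1) * (1 / r1) ≤ 0 :=
      mul_nonpos_of_nonpos_of_nonneg hEp (by positivity)
    have h2 : c1 * (deriv η (r / r1) * (1 / r1)) ≤ 0 :=
      mul_nonpos_of_nonneg_of_nonpos hc10.le h1
    have h3 : c1 * (deriv η (r / r1) * (1 / r1)) * psiFun ζ r2 r ≤ 0 :=
      mul_nonpos_of_nonpos_of_nonneg h2 hP0
    exact mul_nonneg hS.le (by linarith)
  have hterm3 : sn k r * (-(1/(16*r) + 1)) ≤ sn k r * (-(c1 * η (r / r1) * G r)) := by
    apply mul_le_mul_of_nonneg_left _ hS.le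
    have hce : c1 * η (r / r1) ≤ 1 := by nlinarith [hE.1, hE.2]
    have hce0 : 0 ≤ c1 * η (r / r1) := mul_nonneg hc10.le hE.1
    have h1 : c1 * η (r / r1) * G r ≤ G r := by
      nlinarith [mul_le_mul_of_nonneg_right hce hGr0]
    linarith
  have hpos : 0 < sn k r * ((1/r - 1/100) * (1/2)) + sn k r * (-(1/(16*r) + 1)) := by
    have hX : 0 < (1/r - 1/100) * (1/2) + (-(1/(16*r) + 1)) := by
      have h16 : 1/(16*r) = (1/16) * (1/r) := by ring
      rw [h16]
      nlinarith [hrinv]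
    nlinarith [mul_pos hS hX]
  nlinarith [hterm1, hterm2, hterm3, hpos]
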